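/- arXiv:2111.05509 — 4 statements merged into one kernel-verified Lean document; each statement's English description precedes it below -/
import Mathlib

section
/- Let Σ ∈ ℝ^{(T+1)n_x×(T+1)n_x} be block-lower-triangular and invertible, and let Φ̃x ∈ ℝ^{(T+1)n_x×(T+1)n_x}, Φ̃u ∈ ℝ^{(T+1)n_u×(T+1)n_x} be block-lower-triangular matrices satisfying (I − Z𝒜)Φ̃x − ZℬΦ̃u = Σ. Then Φ̃x is invertible, and the block-lower-triangular matrix K := Φ̃uΦ̃x^{-1} achieves the desired response: I − Z(𝒜 + ℬK) is invertible, (I − Z(𝒜+ℬK))^{-1}Σ = Φ̃x, and K(I − Z(𝒜+ℬK))^{-1}Σ = Φ̃u. -/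
open Matrix Finset

noncomputable section

/-- A `(T+1)×(T+1)`-block matrix (with `p×q` blocks) is block-lower-triangular if its
`(i,j)` block vanishes whenever `j > i`. -/
def IsBLT {T p q : ℕ} (M : Matrix (Fin (T+1) × Fin p) (Fin (T+1) × Fin q) ℝ) : Prop :=
  ∀ (i j : Fin (T+1)) (a : Fin p) (b : Fin q), i < j → M (i, a) (j, b) = 0

/-- The block-downshift matrix `Z`: its `(i,j)` block is the identity if `i = j+1`,
and zero otherwise. -/
def dshift (T n : ℕ) : Matrix (Fin (T+1) × Fin n) (Fin (T+1) × Fin n) ℝ :=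
  Matrix.of fun i j => if ((i.1 : ℕ) = (j.1 : ℕ) + 1 ∧ i.2 = j.2) then (1 : ℝ) else 0

/-- `blkdiag(M, …, M, 0)`: `T` copies of `M` on the block diagonal followed by one zero block. -/
def blkDiag {p q : ℕ} (T : ℕ) (M : Matrix (Fin p) (Fin q) ℝ) :
    Matrix (Fin (T+1) × Fin p) (Fin (T+1) × Fin q) ℝ :=
  Matrix.of fun i j => if (i.1 = j.1 ∧ (i.1 : ℕ) < T) then M i.2 j.2 else 0

/-- Strictly block-lower-triangular: the `(i,j)` block vanishes whenever `j ≥ i`. -/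
def IsSBLT {T p q : ℕ} (M : Matrix (Fin (T+1) × Fin p) (Fin (T+1) × Fin q) ℝ) : Prop :=
  ∀ (i j : Fin (T+1)) (a : Fin p) (b : Fin q), i ≤ j → M (i, a) (j, b) = 0

lemma IsBLT.mul {T p q r : ℕ} {M : Matrix (Fin (T+1) × Fin p) (Fin (T+1) × Fin q) ℝ}
    {P : Matrix (Fin (T+1) × Fin q) (Fin (T+1) × Fin r) ℝ}
    (hM : IsBLT M) (hP : IsBLT P) : IsBLT (M * P) := by
  intro i j a b hij
  rw [Matrix.mul_apply]
  apply Finset.sum_eq_zero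
  rintro ⟨k, c⟩ -
  rcases lt_or_ge i k with h | h
  · rw [hM i k a c h, zero_mul]
  · rw [hP k j c b (lt_of_le_of_lt h hij), mul_zero]

lemma IsBLT.mul_sblt {T p q r : ℕ} {M : Matrix (Fin (T+1) × Fin p) (Fin (T+1) × Fin q) ℝ}
    {P : Matrix (Fin (T+1) × Fin q) (Fin (T+1) × Fin r) ℝ}
    (hM : IsBLT M) (hP : IsSBLT P) : IsSBLT (M * P) := by
  intro i j a b hij
  rw [Matrix.mul_apply]
  apply Finset.sum_eq_zero
  rintro ⟨k, c⟩ -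
  rcases lt_or_ge i k with h | h
  · rw [hM i k a c h, zero_mul]
  · rw [hP k j c b (le_trans h hij), mul_zero]

lemma IsSBLT.mul_blt {T p q r : ℕ} {M : Matrix (Fin (T+1) × Fin p) (Fin (T+1) × Fin q) ℝ}
    {P : Matrix (Fin (T+1) × Fin q) (Fin (T+1) × Fin r) ℝ}
    (hM : IsSBLT M) (hP : IsBLT P) : IsSBLT (M * P) := by
  intro i j a b hij
  rw [Matrix.mul_apply]
  apply Finset.sum_eq_zero
  rintro ⟨k, c⟩ -
  rcases le_or_gt i k with h | h
  · rw [hM i k a c h, zero_mul]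
  · rw [hP k j c b (lt_of_lt_of_le h hij), mul_zero]

lemma IsSBLT.add {T p q : ℕ} {M P : Matrix (Fin (T+1) × Fin p) (Fin (T+1) × Fin q) ℝ}
    (hM : IsSBLT M) (hP : IsSBLT P) : IsSBLT (M + P) := by
  intro i j a b hij
  simp [hM i j a b hij, hP i j a b hij]

lemma blkDiag_blt {p q T : ℕ} (M : Matrix (Fin p) (Fin q) ℝ) : IsBLT (blkDiag T M) := by
  intro i j a b hij
  simp only [blkDiag, Matrix.of_apply]
  rw [if_neg]
  rintro ⟨h, -⟩
  exact absurd h (ne_of_lt hij)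

lemma dshift_mul_blt {T p q : ℕ} {P : Matrix (Fin (T+1) × Fin p) (Fin (T+1) × Fin q) ℝ}
    (hP : IsBLT P) : IsSBLT (dshift T p * P) := by
  intro i j a b hij
  rw [Matrix.mul_apply]
  apply Finset.sum_eq_zero
  rintro ⟨k, c⟩ -
  by_cases h : (i : ℕ) = (k : ℕ) + 1 ∧ a = c
  · have hkj : k < j := by
      have : (k : ℕ) < (i : ℕ) := by omega
      exact lt_of_lt_of_le this hij
    rw [hP k j c b hkj, mul_zero]
  · simp only [dshift, Matrix.of_apply, if_neg h, zero_mul]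

/-- Powers of a strictly block-lower-triangular matrix vanish below the `k`-th subdiagonal. -/
lemma IsSBLT.pow_apply {T p : ℕ} {N : Matrix (Fin (T+1) × Fin p) (Fin (T+1) × Fin p) ℝ}
    (hN : IsSBLT N) :
    ∀ (k : ℕ) (i j : Fin (T+1)) (a b : Fin p), (i : ℕ) < (j : ℕ) + k →
      (N ^ k) (i, a) (j, b) = 0 := by
  intro k
  induction k with
  | zero =>
    intro i j a b h
    have : (i, a) ≠ (j, b) := by
      intro he
      rcases Prod.mk.inj he with ⟨h1, h2⟩
      rw [h1] at h
      omega
    simp [Matrix.one_apply_ne this]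
  | succ k ih =>
    intro i j a b h
    rw [pow_succ, Matrix.mul_apply]
    apply Finset.sum_eq_zero
    rintro ⟨l, c⟩ -
    rcases lt_or_ge (i : ℕ) ((l : ℕ) + k) with hl | hl
    · rw [ih i l a c hl, zero_mul]
    · have hlj : l ≤ j := by
        have : (l : ℕ) ≤ (j : ℕ) := by omega
        exact Fin.le_def.mpr this
      rw [hN l j c b hlj, mul_zero]

lemma IsSBLT.isNilpotent {T p : ℕ} {N : Matrix (Fin (T+1) × Fin p) (Fin (T+1) × Fin p) ℝ}
    (hN : IsSBLT N) : IsNilpotent N := by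
  refine ⟨T + 1, ?_⟩
  ext ⟨i, a⟩ ⟨j, b⟩
  rw [hN.pow_apply (T + 1) i j a b (by omega)]
  rfl

lemma IsSBLT.isUnit_one_sub {T p : ℕ} {N : Matrix (Fin (T+1) × Fin p) (Fin (T+1) × Fin p) ℝ}
    (hN : IsSBLT N) : IsUnit (1 - N) :=
  hN.isNilpotent.isUnit_one_sub

lemma isBLT_iff_blockTriangular {T p : ℕ} {M : Matrix (Fin (T+1) × Fin p) (Fin (T+1) × Fin p) ℝ} :
    IsBLT M ↔ M.BlockTriangular (fun x : Fin (T+1) × Fin p => OrderDual.toDual x.1) := by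
  constructor
  · rintro h ⟨i, a⟩ ⟨j, b⟩ hij
    exact h i j a b hij
  · intro h i j a b hij
    exact h (show OrderDual.toDual j < OrderDual.toDual i from hij)

lemma IsBLT.inv {T p : ℕ} {M : Matrix (Fin (T+1) × Fin p) (Fin (T+1) × Fin p) ℝ}
    (hM : IsBLT M) (hU : IsUnit M) : IsBLT M⁻¹ := by
  haveI := hU.invertible
  exact isBLT_iff_blockTriangular.mpr
    (Matrix.blockTriangular_inv_of_blockTriangular (isBLT_iff_blockTriangular.mp hM))

theorem statement1 (nx nu T : ℕ) (hnx : 1 ≤ nx) (hnu : 1 ≤ nu) (hT : 1 ≤ T)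
    (Ahat : Matrix (Fin nx) (Fin nx) ℝ) (Bhat : Matrix (Fin nx) (Fin nu) ℝ)
    (Sig Phix : Matrix (Fin (T+1) × Fin nx) (Fin (T+1) × Fin nx) ℝ)
    (Phiu : Matrix (Fin (T+1) × Fin nu) (Fin (T+1) × Fin nx) ℝ)
    (hSigBLT : IsBLT Sig) (hSig : IsUnit Sig)
    (hPhixBLT : IsBLT Phix) (hPhiuBLT : IsBLT Phiu)
    (haff : (1 - dshift T nx * blkDiag T Ahat) * Phix -
        dshift T nx * blkDiag T Bhat * Phiu = Sig) :
    IsUnit Phix ∧ IsBLT (Phiu * Phix⁻¹) ∧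
    IsUnit (1 - dshift T nx * (blkDiag T Ahat + blkDiag T Bhat * (Phiu * Phix⁻¹))) ∧
    (1 - dshift T nx * (blkDiag T Ahat + blkDiag T Bhat * (Phiu * Phix⁻¹)))⁻¹ * Sig = Phix ∧
    (Phiu * Phix⁻¹) *
        ((1 - dshift T nx * (blkDiag T Ahat + blkDiag T Bhat * (Phiu * Phix⁻¹)))⁻¹ * Sig) =
      Phiu := by
  set Z := dshift T nx with hZ
  set A := blkDiag T Ahat with hA
  set B := blkDiag T Bhat with hB
  have hSigdet : IsUnit Sig.det := (Matrix.isUnit_iff_isUnit_det Sig).mp hSig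
  -- S := Z*A*Phix + Z*B*Phiu is strictly BLT
  have hS : IsSBLT (Z * A * Phix + Z * B * Phiu) :=
    ((dshift_mul_blt (blkDiag_blt Ahat)).mul_blt hPhixBLT).add
      ((dshift_mul_blt (blkDiag_blt Bhat)).mul_blt hPhiuBLT)
  have hP : Phix = Sig + (Z * A * Phix + Z * B * Phiu) := by
    rw [← haff]; noncomm_ring
  -- Phix is a unit
  have hSinvBLT : IsBLT Sig⁻¹ := hSigBLT.inv hSig
  have hNS : IsSBLT (Sig⁻¹ * (Z * A * Phix + Z * B * Phiu)) := hSinvBLT.mul_sblt hS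
  have hfac : Phix = Sig * (1 - -(Sig⁻¹ * (Z * A * Phix + Z * B * Phiu))) := by
    rw [sub_neg_eq_add, mul_add, mul_one, ← Matrix.mul_assoc,
      Matrix.mul_nonsing_inv Sig hSigdet, Matrix.one_mul, ← hP]
  have hNSneg : IsSBLT (-(Sig⁻¹ * (Z * A * Phix + Z * B * Phiu))) := by
    intro i j a b hij
    simp [hNS i j a b hij]
  have hPhixUnit : IsUnit Phix := by
    rw [hfac]
    exact hSig.mul hNSneg.isUnit_one_sub
  have hPhixdet : IsUnit Phix.det := (Matrix.isUnit_iff_isUnit_det Phix).mp hPhixUnit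
  -- K is BLT
  have hKBLT : IsBLT (Phiu * Phix⁻¹) := hPhiuBLT.mul (hPhixBLT.inv hPhixUnit)
  have hKPhix : (Phiu * Phix⁻¹) * Phix = Phiu := by
    rw [Matrix.mul_assoc, Matrix.nonsing_inv_mul Phix hPhixdet, Matrix.mul_one]
  -- the closed-loop matrix is a unit
  have hCL : IsSBLT (Z * (A + B * (Phiu * Phix⁻¹))) := by
    have : Z * (A + B * (Phiu * Phix⁻¹)) = Z * A + Z * (B * (Phiu * Phix⁻¹)) := by
      rw [mul_add]
    rw [this]
    exact (dshift_mul_blt (blkDiag_blt Ahat)).add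
      (dshift_mul_blt ((blkDiag_blt Bhat).mul hKBLT))
  have hMUnit : IsUnit (1 - Z * (A + B * (Phiu * Phix⁻¹))) := hCL.isUnit_one_sub
  have hMdet : IsUnit (1 - Z * (A + B * (Phiu * Phix⁻¹))).det :=
    (Matrix.isUnit_iff_isUnit_det _).mp hMUnit
  -- the key identity
  have hMP : (1 - Z * (A + B * (Phiu * Phix⁻¹))) * Phix = Sig := by
    have expand : (1 - Z * (A + B * (Phiu * Phix⁻¹))) * Phix =
        (1 - Z * A) * Phix - Z * B * ((Phiu * Phix⁻¹) * Phix) := by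
      noncomm_ring
      simp only [Matrix.mul_assoc]
    rw [expand, hKPhix, haff]
  have hinv : (1 - Z * (A + B * (Phiu * Phix⁻¹)))⁻¹ * Sig = Phix := by
    rw [← hMP, ← Matrix.mul_assoc, Matrix.nonsing_inv_mul _ hMdet, Matrix.one_mul]
  exact ⟨hPhixUnit, hKBLT, hMUnit, hinv, by rw [hinv, hKPhix]⟩
end
end

section
/- Fix ε_A, ε_B, σ_w ≥ 0. For any f, y, x ∈ ℝ^{n_x}, u ∈ ℝ^{n_u}, and b ∈ ℝ, the following are equivalent: (i) fᵀ(y + Δ_A x + Δ_B u + w) ≤ b for every admissible (Δ_A, Δ_B, w); (ii) fᵀy + ‖f‖_1(ε_A‖x‖_∞ + ε_B‖u‖_∞ + σ_w) ≤ b. -/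
open Matrix Finset

noncomputable section

/-- The ℓ¹ norm of a vector in `ℝⁿ`: `‖v‖₁ = ∑ i, |v i|`.
(The ℓ∞ norm is the default norm `‖·‖` on `Fin n → ℝ`.) -/
def norm1 {n : ℕ} (v : Fin n → ℝ) : ℝ := ∑ i, |v i|

/-- The operator norm `‖M‖_{∞→∞}` induced by the sup norm, i.e. the maximum
absolute row sum. -/
def opInf {n m : ℕ} (M : Matrix (Fin n) (Fin m) ℝ) : ℝ := ⨆ i, ∑ j, |M i j|

lemma mul_sign' (t : ℝ) : t * Real.sign t = |t| := by
  rcases lt_trichotomy t 0 with h | h | h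
  · rw [Real.sign_of_neg h, abs_of_neg h]; ring
  · simp [h]
  · rw [Real.sign_of_pos h, abs_of_pos h]; ring

lemma abs_sign_le (t : ℝ) : |Real.sign t| ≤ 1 := by
  rcases lt_trichotomy t 0 with h | h | h
  · simp [Real.sign_of_neg h]
  · simp [h]
  · simp [Real.sign_of_pos h]

lemma exists_argmax {n : ℕ} (hn : 1 ≤ n) (v : Fin n → ℝ) : ∃ j, |v j| = ‖v‖ := by
  have : Nonempty (Fin n) := ⟨⟨0, hn⟩⟩
  obtain ⟨j, _, hj⟩ := Finset.exists_mem_eq_sup Finset.univ univ_nonempty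
    (fun i => ‖v i‖₊)
  refine ⟨j, ?_⟩
  rw [Pi.norm_def, hj]
  simp [Real.norm_eq_abs]

lemma dot_le {n : ℕ} (f v : Fin n → ℝ) (c : ℝ) (h : ∀ i, |v i| ≤ c) :
    f ⬝ᵥ v ≤ norm1 f * c := by
  calc f ⬝ᵥ v = ∑ i, f i * v i := rfl
    _ ≤ ∑ i, |f i| * c := by
        refine Finset.sum_le_sum fun i _ => ?_
        calc f i * v i ≤ |f i * v i| := le_abs_self _
          _ = |f i| * |v i| := abs_mul _ _
          _ ≤ |f i| * c := mul_le_mul_of_nonneg_left (h i) (abs_nonneg _)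
    _ = norm1 f * c := by rw [norm1, Finset.sum_mul]

lemma rowsum_le {n m : ℕ} (M : Matrix (Fin n) (Fin m) ℝ) (ε : ℝ)
    (h : opInf M ≤ ε) (i : Fin n) : ∑ j, |M i j| ≤ ε := by
  refine le_trans ?_ h
  exact le_ciSup (f := fun i => ∑ j, |M i j|) (Set.Finite.bddAbove (Set.finite_range _)) i

lemma mulVec_bound {n m : ℕ} (M : Matrix (Fin n) (Fin m) ℝ) (x : Fin m → ℝ)
    (ε : ℝ) (h : opInf M ≤ ε) (i : Fin n) : |M.mulVec x i| ≤ ε * ‖x‖ := by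
  have hx : ∀ j, |x j| ≤ ‖x‖ := fun j => by
    simpa [Real.norm_eq_abs] using norm_le_pi_norm x j
  calc |M.mulVec x i| = |∑ j, M i j * x j| := rfl
    _ ≤ ∑ j, |M i j * x j| := Finset.abs_sum_le_sum_abs _ _
    _ ≤ ∑ j, |M i j| * ‖x‖ := by
        refine Finset.sum_le_sum fun j _ => ?_
        rw [abs_mul]
        exact mul_le_mul_of_nonneg_left (hx j) (abs_nonneg _)
    _ = (∑ j, |M i j|) * ‖x‖ := by rw [Finset.sum_mul]
    _ ≤ ε * ‖x‖ := mul_le_mul_of_nonneg_right (rowsum_le M ε h i) (norm_nonneg _)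

theorem statement11 (nx nu : ℕ) (hnx : 1 ≤ nx) (hnu : 1 ≤ nu)
    (εA εB σw : ℝ) (hεA : 0 ≤ εA) (hεB : 0 ≤ εB) (hσw : 0 ≤ σw)
    (f y x : Fin nx → ℝ) (u : Fin nu → ℝ) (b : ℝ) :
    (∀ (ΔA : Matrix (Fin nx) (Fin nx) ℝ) (ΔB : Matrix (Fin nx) (Fin nu) ℝ)
        (w : Fin nx → ℝ), opInf ΔA ≤ εA → opInf ΔB ≤ εB → ‖w‖ ≤ σw →
        f ⬝ᵥ (y + ΔA.mulVec x + ΔB.mulVec u + w) ≤ b) ↔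
      f ⬝ᵥ y + norm1 f * (εA * ‖x‖ + εB * ‖u‖ + σw) ≤ b := by
  have : Nonempty (Fin nx) := ⟨⟨0, hnx⟩⟩
  constructor
  · intro h
    obtain ⟨jx, hjx⟩ := exists_argmax hnx x
    obtain ⟨ju, hju⟩ := exists_argmax hnu u
    set ΔA : Matrix (Fin nx) (Fin nx) ℝ :=
      fun i j => if j = jx then Real.sign (f i) * εA * Real.sign (x jx) else 0 with hΔA
    set ΔB : Matrix (Fin nx) (Fin nu) ℝ :=
      fun i j => if j = ju then Real.sign (f i) * εB * Real.sign (u ju) else 0 with hΔB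
    set w : Fin nx → ℝ := fun i => Real.sign (f i) * σw with hw
    have rowA : ∀ i, ∑ j, |ΔA i j| = |Real.sign (f i) * εA * Real.sign (x jx)| := by
      intro i
      rw [Finset.sum_eq_single jx] <;> simp [hΔA]
      intro j hj; simp [hj]
    have entry_le : ∀ (s t ε : ℝ), 0 ≤ ε → |Real.sign s * ε * Real.sign t| ≤ ε := by
      intro s t ε hε
      rw [abs_mul, abs_mul, abs_of_nonneg hε]
      calc |Real.sign s| * ε * |Real.sign t| ≤ 1 * ε * 1 := by
            apply mul_le_mul
            · exact mul_le_mul (abs_sign_le _) le_rfl hε (by norm_num)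
            · exact abs_sign_le _
            · exact abs_nonneg _
            · positivity
        _ = ε := by ring
    have hAop : opInf ΔA ≤ εA := by
      refine ciSup_le fun i => ?_
      rw [rowA i]; exact entry_le _ _ _ hεA
    have rowB : ∀ i, ∑ j, |ΔB i j| = |Real.sign (f i) * εB * Real.sign (u ju)| := by
      intro i
      rw [Finset.sum_eq_single ju] <;> simp [hΔB]
      intro j hj; simp [hj]
    have hBop : opInf ΔB ≤ εB := by
      refine ciSup_le fun i => ?_
      rw [rowB i]; exact entry_le _ _ _ hεB
    have hwn : ‖w‖ ≤ σw := by
      rw [pi_norm_le_iff_of_nonneg hσw]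
      intro i
      simp only [Real.norm_eq_abs, hw]
      rw [abs_mul, abs_of_nonneg hσw]
      calc |Real.sign (f i)| * σw ≤ 1 * σw :=
            mul_le_mul_of_nonneg_right (abs_sign_le _) hσw
        _ = σw := one_mul σw
    have key := h ΔA ΔB w hAop hBop hwn
    have eA : f ⬝ᵥ ΔA.mulVec x = norm1 f * (εA * ‖x‖) := by
      have : ∀ i, ΔA.mulVec x i = Real.sign (f i) * (εA * ‖x‖) := by
        intro i
        rw [Matrix.mulVec, dotProduct, Finset.sum_eq_single jx]
        · simp only [hΔA, if_pos rfl]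
          rw [mul_assoc, mul_assoc, mul_comm (Real.sign (x jx)), mul_sign', hjx]
        · intro j _ hj; simp [hΔA, hj]
        · simp
      simp only [dotProduct]
      rw [show (∑ i, f i * ΔA.mulVec x i) = ∑ i, |f i| * (εA * ‖x‖) from
        Finset.sum_congr rfl fun i _ => by rw [this i, ← mul_assoc, mul_sign']]
      rw [norm1, Finset.sum_mul]
    have eB : f ⬝ᵥ ΔB.mulVec u = norm1 f * (εB * ‖u‖) := by
      have : ∀ i, ΔB.mulVec u i = Real.sign (f i) * (εB * ‖u‖) := by
        intro i
        rw [Matrix.mulVec, dotProduct, Finset.sum_eq_single ju]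
        · simp only [hΔB, if_pos rfl]
          rw [mul_assoc, mul_assoc, mul_comm (Real.sign (u ju)), mul_sign', hju]
        · intro j _ hj; simp [hΔB, hj]
        · simp
      simp only [dotProduct]
      rw [show (∑ i, f i * ΔB.mulVec u i) = ∑ i, |f i| * (εB * ‖u‖) from
        Finset.sum_congr rfl fun i _ => by rw [this i, ← mul_assoc, mul_sign']]
      rw [norm1, Finset.sum_mul]
    have ew : f ⬝ᵥ w = norm1 f * σw := by
      simp only [dotProduct, hw]
      rw [show (∑ i, f i * (Real.sign (f i) * σw)) = ∑ i, |f i| * σw from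
        Finset.sum_congr rfl fun i _ => by rw [← mul_assoc, mul_sign']]
      rw [norm1, Finset.sum_mul]
    rw [dotProduct_add, dotProduct_add, dotProduct_add, eA, eB, ew] at key
    linarith [key]
  · intro h ΔA ΔB w hA hB hwn
    have bA : f ⬝ᵥ ΔA.mulVec x ≤ norm1 f * (εA * ‖x‖) :=
      dot_le f _ _ (mulVec_bound ΔA x εA hA)
    have bB : f ⬝ᵥ ΔB.mulVec u ≤ norm1 f * (εB * ‖u‖) :=
      dot_le f _ _ (mulVec_bound ΔB u εB hB)
    have bw : f ⬝ᵥ w ≤ norm1 f * σw := by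
      refine dot_le f w σw fun i => ?_
      simpa [Real.norm_eq_abs] using (norm_le_pi_norm w i).trans hwn
    rw [dotProduct_add, dotProduct_add, dotProduct_add]
    nlinarith [bA, bB, bw, h]
end
end

section
/- (Robust constraint satisfaction of the SLS inner approximation.) Suppose the family (Φ̃x^{t,i}, Φ̃u^{t,i}, σ_0,…,σ_{T−1}) is feasible for the tightened SLS problem at (T, ξ). Arrange the blocks into block-lower-triangular matrices Φ̃x ∈ ℝ^{(T+1)n_x×(T+1)n_x} and Φ̃u ∈ ℝ^{(T+1)n_u×(T+1)n_x} whose block in row t, column c is Φ̃x^{t,t−c} (resp. Φ̃u^{t,t−c}) for c ≤ t and zero for c > t. Then Φ̃x is invertible; let K := Φ̃uΦ̃x^{−1}, with blocks K^{t,t−c} in row t, column c. For every Δ_A ∈ ℝ^{n_x×n_x} with ‖Δ_A‖_{∞→∞} ≤ ε_A, every Δ_B ∈ ℝ^{n_x×n_u} with ‖Δ_B‖_{∞→∞} ≤ ε_B, and every disturbance sequence w_0,…,w_{T−1} ∈ ℝ^{n_x} with ‖w_t‖_∞ ≤ σ_w, the trajectory defined by x_0 = ξ, u_t = Σ_{i=0}^{t}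 K^{t,t−i}x_i, x_{t+1} = (Â + Δ_A)x_t + (B̂ + Δ_B)u_t + w_t satisfies F_x x_t ≤ b_x and F_u u_t ≤ b_u for all 0 ≤ t ≤ T−1, and F_T x_T ≤ b_T. -/
/-!
Let `δₜ = ΔA xₜ + ΔB uₜ + wₜ` be the lumped disturbance and normalise it to `ŵ₀ = ξ`,
`ŵₜ₊₁ = δₜ / σₜ`. Since `K = Φu Φx⁻¹` is block lower triangular, hence causal, the affine SLS
constraints force the closed loop to be `xₜ = ∑_c Φx^{t,t-c} ŵ_c` and `uₜ = ∑_c Φu^{t,t-c} ŵ_c`,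
whatever `ΔA`, `ΔB`, `w` are. Given `‖ŵ_c‖ ≤ 1` for `1 ≤ c ≤ t`, this representation bounds
`‖xₜ‖` and `‖uₜ‖`, so the norm-bound constraints give `‖δₜ‖ ≤ σₜ`, i.e. `‖ŵₜ₊₁‖ ≤ 1`.
Hölder's inequality `f ⬝ᵥ Φ ŵ ≤ ‖Φᵀ f‖₁` for `‖ŵ‖ ≤ 1` then turns the tightened constraints
into the true ones. `Φx` is invertible since its diagonal blocks are `I, σ₀ I, …, σ_{T-1} I`.
-/

open Matrix Finset

noncomputable section

/-- Feasibility of a family `(Φ̃x^{t,i}, Φ̃u^{t,i}, σ₀, …, σ_{T−1})` for the tightened SLS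
problem at horizon `T` and initial state `ξ`:
(a) the SLS affine constraints, (b) the lumped-disturbance norm-bound constraints, and
(c) the tightened state, input, and terminal constraints. -/
structure SLSFeasible {nx nu px pu pT : ℕ}
    (Ahat : Matrix (Fin nx) (Fin nx) ℝ) (Bhat : Matrix (Fin nx) (Fin nu) ℝ)
    (εA εB σw : ℝ)
    (Fx : Matrix (Fin px) (Fin nx) ℝ) (bx : Fin px → ℝ)
    (Fu : Matrix (Fin pu) (Fin nu) ℝ) (bu : Fin pu → ℝ)
    (FT : Matrix (Fin pT) (Fin nx) ℝ) (bT : Fin pT → ℝ)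
    (T : ℕ) (ξ : Fin nx → ℝ)
    (Phix : ℕ → ℕ → Matrix (Fin nx) (Fin nx) ℝ)
    (Phiu : ℕ → ℕ → Matrix (Fin nu) (Fin nx) ℝ)
    (σ : ℕ → ℝ) : Prop where
  sigma_pos : ∀ t < T, 0 < σ t
  phix_zero : Phix 0 0 = 1
  phix_rec_zero : ∀ t < T, Phix (t + 1) 0 = σ t • (1 : Matrix (Fin nx) (Fin nx) ℝ)
  phix_rec : ∀ t < T, ∀ j, 1 ≤ j → j ≤ t + 1 →
    Phix (t + 1) j = Ahat * Phix t (j - 1) + Bhat * Phiu t (j - 1)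
  bound_zero : εA * ‖(Phix 0 0).mulVec ξ‖ + εB * ‖(Phiu 0 0).mulVec ξ‖ + σw ≤ σ 0
  bound_succ : ∀ t, 1 ≤ t → t < T →
    εA * (‖(Phix t t).mulVec ξ‖ + ∑ i ∈ Icc 1 t, opInf (Phix t (t - i))) +
      εB * (‖(Phiu t t).mulVec ξ‖ + ∑ i ∈ Icc 1 t, opInf (Phiu t (t - i))) + σw ≤ σ t
  state_tight : ∀ (i : Fin px), ∀ t < T,
    Fx i ⬝ᵥ (Phix t t).mulVec ξ +
      ∑ k ∈ Icc 1 t, norm1 ((Phix t (t - k))ᵀ.mulVec (Fx i)) ≤ bx i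
  input_tight : ∀ (i : Fin pu), ∀ t < T,
    Fu i ⬝ᵥ (Phiu t t).mulVec ξ +
      ∑ k ∈ Icc 1 t, norm1 ((Phiu t (t - k))ᵀ.mulVec (Fu i)) ≤ bu i
  terminal_tight : ∀ (i : Fin pT),
    FT i ⬝ᵥ (Phix T T).mulVec ξ +
      ∑ k ∈ Icc 1 T, norm1 ((Phix T (T - k))ᵀ.mulVec (FT i)) ≤ bT i

/-- Arrange a family of blocks `P t i` into a block-lower-triangular matrix whose block in
row `t`, column `c` is `P t (t - c)` for `c ≤ t`, and zero for `c > t`. -/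
def bigBlock {n m : ℕ} (T : ℕ) (P : ℕ → ℕ → Matrix (Fin n) (Fin m) ℝ) :
    Matrix (Fin (T + 1) × Fin n) (Fin (T + 1) × Fin m) ℝ :=
  Matrix.of fun i j =>
    if (j.1 : ℕ) ≤ (i.1 : ℕ) then P (i.1 : ℕ) ((i.1 : ℕ) - (j.1 : ℕ)) i.2 j.2 else 0

lemma opInf_nonneg {n m : ℕ} (M : Matrix (Fin n) (Fin m) ℝ) : 0 ≤ opInf M :=
  Real.iSup_nonneg fun _ => sum_nonneg fun _ _ => abs_nonneg _

lemma sum_abs_le_opInf {n m : ℕ} (M : Matrix (Fin n) (Fin m) ℝ) (i : Fin n) :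
    ∑ j, |M i j| ≤ opInf M :=
  le_ciSup (f := fun i => ∑ j, |M i j|) (Set.finite_range _).bddAbove i

lemma abs_dotProduct_le_norm1_mul_norm {n : ℕ} (v w : Fin n → ℝ) :
    |v ⬝ᵥ w| ≤ norm1 v * ‖w‖ :=
  calc |v ⬝ᵥ w| ≤ ∑ j, |v j * w j| := abs_sum_le_sum_abs _ _
    _ ≤ ∑ j, |v j| * ‖w‖ := sum_le_sum fun j _ => by
        rw [abs_mul, ← Real.norm_eq_abs (w j)]
        gcongr
        exact norm_le_pi_norm w j
    _ = norm1 v * ‖w‖ := (sum_mul _ _ _).symm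

lemma norm_mulVec_le_opInf_mul_norm {n m : ℕ} (M : Matrix (Fin n) (Fin m) ℝ) (v : Fin m → ℝ) :
    ‖M *ᵥ v‖ ≤ opInf M * ‖v‖ := by
  refine (pi_norm_le_iff_of_nonneg (mul_nonneg (opInf_nonneg M) (norm_nonneg v))).2 fun i => ?_
  calc ‖(M *ᵥ v) i‖ = |M i ⬝ᵥ v| := Real.norm_eq_abs _
    _ ≤ norm1 (M i) * ‖v‖ := abs_dotProduct_le_norm1_mul_norm _ _
    _ ≤ opInf M * ‖v‖ := by gcongr; exact sum_abs_le_opInf M i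

lemma norm_mulVec_le_of_opInf_le {n m : ℕ} {M : Matrix (Fin n) (Fin m) ℝ} {v : Fin m → ℝ}
    {ε r : ℝ} (hM : opInf M ≤ ε) (hv : ‖v‖ ≤ r) : ‖M *ᵥ v‖ ≤ ε * r :=
  (norm_mulVec_le_opInf_mul_norm M v).trans
    (mul_le_mul hM hv (norm_nonneg v) ((opInf_nonneg M).trans hM))

lemma dotProduct_mulVec_le_norm1 {n m : ℕ} (f : Fin n → ℝ) (M : Matrix (Fin n) (Fin m) ℝ)
    {w : Fin m → ℝ} (hw : ‖w‖ ≤ 1) : f ⬝ᵥ (M *ᵥ w) ≤ norm1 (Mᵀ *ᵥ f) :=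
  calc f ⬝ᵥ (M *ᵥ w) = (Mᵀ *ᵥ f) ⬝ᵥ w := by rw [dotProduct_mulVec, mulVec_transpose]
    _ ≤ norm1 (Mᵀ *ᵥ f) * ‖w‖ := (le_abs_self _).trans (abs_dotProduct_le_norm1_mul_norm _ _)
    _ ≤ norm1 (Mᵀ *ᵥ f) := mul_le_of_le_one_right (sum_nonneg fun _ _ => abs_nonneg _) hw

def BlockLowerTriangular {ι m n R : Type*} [LT ι] [Zero R] (M : Matrix (ι × m) (ι × n) R) :
    Prop :=
  ∀ ⦃i j⦄, i.1 < j.1 → M i j = 0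

namespace BlockLowerTriangular

variable {ι m n o R : Type*} [LinearOrder ι]

lemma mul [Fintype ι] [Fintype n] [NonUnitalNonAssocSemiring R]
    {M : Matrix (ι × m) (ι × n) R} {N : Matrix (ι × n) (ι × o) R}
    (hM : BlockLowerTriangular M) (hN : BlockLowerTriangular N) :
    BlockLowerTriangular (M * N) := fun i j hij => by
  rw [mul_apply]
  refine sum_eq_zero fun k _ => ?_
  rcases lt_or_ge i.1 k.1 with hik | hki
  · rw [hM hik, zero_mul]
  · rw [hN (hki.trans_lt hij), mul_zero]

lemma inv [Fintype ι] [Fintype m] [DecidableEq ι] [DecidableEq m] [CommRing R]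
    {M : Matrix (ι × m) (ι × m) R} (hM : BlockLowerTriangular M) :
    BlockLowerTriangular M⁻¹ := by
  by_cases hdet : IsUnit M.det
  · have := M.invertibleOfIsUnitDet hdet
    exact blockTriangular_inv_of_blockTriangular (b := OrderDual.toDual ∘ Prod.fst) hM
  · rw [nonsing_inv_apply_not_isUnit M hdet]
    exact fun _ _ _ => rfl

end BlockLowerTriangular

section BlockSequences

variable {n m T : ℕ}

-- `Fin.ofNat` reduces modulo `T + 1`, so only `t, i ≤ T` index genuine blocks.
def blockAt (M : Matrix (Fin (T + 1) × Fin n) (Fin (T + 1) × Fin m) ℝ) (t i : ℕ) :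
    Matrix (Fin n) (Fin m) ℝ :=
  of fun a b => M (Fin.ofNat (T + 1) t, a) (Fin.ofNat (T + 1) i, b)

def blockRow (V : Fin (T + 1) × Fin n → ℝ) (t : ℕ) : Fin n → ℝ :=
  fun a => V (Fin.ofNat (T + 1) t, a)

def blockVec (T : ℕ) (v : ℕ → Fin m → ℝ) : Fin (T + 1) × Fin m → ℝ :=
  fun p => v p.1 p.2

def response (P : ℕ → ℕ → Matrix (Fin n) (Fin m) ℝ) (v : ℕ → Fin m → ℝ) (t : ℕ) : Fin n → ℝ :=
  ∑ c ∈ range (t + 1), P t (t - c) *ᵥ v c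

lemma val_ofNat_of_le {t : ℕ} (ht : t ≤ T) : (Fin.ofNat (T + 1) t : ℕ) = t :=
  (Fin.val_ofNat _ _).trans (Nat.mod_eq_of_lt (Nat.lt_succ_of_le ht))

lemma BlockLowerTriangular.blockAt_eq_zero
    {M : Matrix (Fin (T + 1) × Fin n) (Fin (T + 1) × Fin m) ℝ} (hM : BlockLowerTriangular M)
    {t i : ℕ} (hti : t < i) (hi : i ≤ T) : blockAt M t i = 0 := by
  ext a b
  refine hM ?_
  rw [Fin.lt_def, val_ofNat_of_le (hti.le.trans hi), val_ofNat_of_le hi]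
  exact hti

lemma BlockLowerTriangular.blockRow_mulVec_blockVec
    {M : Matrix (Fin (T + 1) × Fin n) (Fin (T + 1) × Fin m) ℝ} (hM : BlockLowerTriangular M)
    (v : ℕ → Fin m → ℝ) {t : ℕ} (ht : t ≤ T) :
    blockRow (M *ᵥ blockVec T v) t = ∑ i ∈ range (t + 1), blockAt M t i *ᵥ v i := by
  ext a
  calc blockRow (M *ᵥ blockVec T v) t a = ∑ j : Fin (T + 1), (blockAt M t j *ᵥ v j) a := by
        simp only [blockRow, blockVec, blockAt, mulVec, dotProduct, Fintype.sum_prod_type,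
          of_apply, Fin.ofNat_val_eq_self]
    _ = ∑ i ∈ range (T + 1), (blockAt M t i *ᵥ v i) a :=
        Fin.sum_univ_eq_sum_range (fun i => (blockAt M t i *ᵥ v i) a) _
    _ = (∑ i ∈ range (t + 1), blockAt M t i *ᵥ v i) a := by
        rw [Finset.sum_apply]
        refine (sum_subset (range_subset_range.2 (by omega)) fun i hiT hit => ?_).symm
        rw [mem_range] at hiT hit
        rw [hM.blockAt_eq_zero (by omega) (by omega), zero_mulVec, Pi.zero_apply]

lemma bigBlock_blockLowerTriangular (P : ℕ → ℕ → Matrix (Fin n) (Fin m) ℝ) :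
    BlockLowerTriangular (bigBlock T P) :=
  fun _ _ hij => if_neg (not_le.2 hij)

lemma blockAt_bigBlock (P : ℕ → ℕ → Matrix (Fin n) (Fin m) ℝ) {t i : ℕ} (hit : i ≤ t)
    (ht : t ≤ T) : blockAt (bigBlock T P) t i = P t (t - i) := by
  ext a b
  simp only [blockAt, bigBlock, of_apply, val_ofNat_of_le ht, val_ofNat_of_le (hit.trans ht),
    if_pos hit]

lemma blockRow_bigBlock_mulVec (P : ℕ → ℕ → Matrix (Fin n) (Fin m) ℝ) (v : ℕ → Fin m → ℝ)
    {t : ℕ} (ht : t ≤ T) : blockRow (bigBlock T P *ᵥ blockVec T v) t = response P v t := by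
  rw [(bigBlock_blockLowerTriangular P).blockRow_mulVec_blockVec v ht, response]
  exact sum_congr rfl fun i hi =>
    by rw [blockAt_bigBlock P (Nat.lt_succ_iff.1 (mem_range.1 hi)) ht]

lemma blockVec_response (P : ℕ → ℕ → Matrix (Fin n) (Fin m) ℝ) (v : ℕ → Fin m → ℝ) :
    blockVec T (response P v) = bigBlock T P *ᵥ blockVec T v := by
  ext ⟨j, a⟩
  have := congrFun (blockRow_bigBlock_mulVec P v (Nat.lt_succ_iff.1 j.2)) a
  simpa only [blockRow, blockVec, Fin.ofNat_val_eq_self] using this.symm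

lemma isUnit_bigBlock (P : ℕ → ℕ → Matrix (Fin n) (Fin n) ℝ) (hP : ∀ t ≤ T, IsUnit (P t 0)) :
    IsUnit (bigBlock T P) := by
  have htri : BlockTriangular (bigBlock T P) (OrderDual.toDual ∘ Prod.fst) :=
    bigBlock_blockLowerTriangular P
  rw [isUnit_iff_isUnit_det, htri.det_fintype]
  refine IsUnit.prod_univ_iff.2 fun k => ?_
  let e : Fin n ≃ {i : Fin (T + 1) × Fin n // (OrderDual.toDual ∘ Prod.fst) i = k} :=
    { toFun a := ⟨(OrderDual.ofDual k, a), rfl⟩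
      invFun p := p.1.2
      left_inv _ := rfl
      right_inv := fun ⟨⟨_, _⟩, h⟩ => by subst h; rfl }
  have hblock : ((bigBlock T P).toSquareBlock (OrderDual.toDual ∘ Prod.fst) k).submatrix e e =
      P (OrderDual.ofDual k : Fin (T + 1)) 0 := by
    ext a b
    simp [e, toSquareBlock_def, bigBlock]
  rw [← det_submatrix_equiv_self e, hblock, ← isUnit_iff_isUnit_det]
  exact hP _ (Nat.lt_succ_iff.1 (OrderDual.ofDual k).2)

end BlockSequences

lemma sum_blockAt_mulVec_eq_response {nx nu T t : ℕ} {Phix : ℕ → ℕ → Matrix (Fin nx) (Fin nx) ℝ}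
    {Phiu : ℕ → ℕ → Matrix (Fin nu) (Fin nx) ℝ} (hΦ : IsUnit (bigBlock T Phix))
    {x v : ℕ → Fin nx → ℝ} (ht : t ≤ T) (hx : ∀ s ≤ t, x s = response Phix v s) :
    ∑ i ∈ range (t + 1), blockAt (bigBlock T Phiu * (bigBlock T Phix)⁻¹) t i *ᵥ x i =
      response Phiu v t := by
  set K := bigBlock T Phiu * (bigBlock T Phix)⁻¹
  have hK : BlockLowerTriangular K :=
    (bigBlock_blockLowerTriangular Phiu).mul (bigBlock_blockLowerTriangular Phix).inv
  calc ∑ i ∈ range (t + 1), blockAt K t i *ᵥ x i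
      = ∑ i ∈ range (t + 1), blockAt K t i *ᵥ response Phix v i :=
        sum_congr rfl fun i hi => by rw [hx i (Nat.lt_succ_iff.1 (mem_range.1 hi))]
    _ = blockRow (K *ᵥ blockVec T (response Phix v)) t := (hK.blockRow_mulVec_blockVec _ ht).symm
    _ = blockRow (bigBlock T Phiu *ᵥ blockVec T v) t := by
        rw [blockVec_response, mulVec_mulVec, Matrix.mul_assoc,
          nonsing_inv_mul _ ((isUnit_iff_isUnit_det _).1 hΦ), Matrix.mul_one]
    _ = response Phiu v t := blockRow_bigBlock_mulVec Phiu v ht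

section Response

variable {n m : ℕ} (P : ℕ → ℕ → Matrix (Fin n) (Fin m) ℝ) (v : ℕ → Fin m → ℝ) (t : ℕ)

lemma response_eq_add_sum :
    response P v t = P t t *ᵥ v 0 + ∑ k ∈ Icc 1 t, P t (t - k) *ᵥ v k := by
  have hrange : range (t + 1) = insert 0 (Icc 1 t) := by
    ext c
    simp only [mem_range, Order.lt_add_one_iff, mem_insert, mem_Icc]
    omega
  rw [response, hrange, sum_insert (by simp), Nat.sub_zero]

variable {P v t}

lemma norm_response_le (hv : ∀ k ∈ Icc 1 t, ‖v k‖ ≤ 1) :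
    ‖response P v t‖ ≤ ‖P t t *ᵥ v 0‖ + ∑ k ∈ Icc 1 t, opInf (P t (t - k)) := by
  rw [response_eq_add_sum]
  refine (norm_add_le _ _).trans (add_le_add_right ((norm_sum_le _ _).trans ?_) _)
  exact sum_le_sum fun k hk =>
    (norm_mulVec_le_of_opInf_le le_rfl (hv k hk)).trans_eq (mul_one _)

lemma mulVec_response_le {p : ℕ} {F : Matrix (Fin p) (Fin n) ℝ} {b : Fin p → ℝ}
    (hv : ∀ k ∈ Icc 1 t, ‖v k‖ ≤ 1)
    (hF : ∀ i, F i ⬝ᵥ (P t t *ᵥ v 0) + ∑ k ∈ Icc 1 t, norm1 ((P t (t - k))ᵀ *ᵥ F i) ≤ b i) :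
    F *ᵥ response P v t ≤ b := fun i => by
  refine le_trans ?_ (hF i)
  rw [mulVec, response_eq_add_sum, dotProduct_add, dotProduct_sum]
  exact add_le_add_right (sum_le_sum fun k hk => dotProduct_mulVec_le_norm1 _ _ (hv k hk)) _

end Response

lemma response_succ {nx nu : ℕ} {A : Matrix (Fin nx) (Fin nx) ℝ} {B : Matrix (Fin nx) (Fin nu) ℝ}
    {Phix : ℕ → ℕ → Matrix (Fin nx) (Fin nx) ℝ} {Phiu : ℕ → ℕ → Matrix (Fin nu) (Fin nx) ℝ}
    {s : ℝ} {t : ℕ} (h0 : Phix (t + 1) 0 = s • 1)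
    (hrec : ∀ j, 1 ≤ j → j ≤ t + 1 → Phix (t + 1) j = A * Phix t (j - 1) + B * Phiu t (j - 1))
    (v : ℕ → Fin nx → ℝ) :
    response Phix v (t + 1) = A *ᵥ response Phix v t + B *ᵥ response Phiu v t + s • v (t + 1) := by
  rw [response, sum_range_succ, Nat.sub_self, h0, smul_mulVec, one_mulVec, response, response,
    mulVec_sum, mulVec_sum, ← sum_add_distrib]
  congr 1
  refine sum_congr rfl fun c hc => ?_
  have hc := mem_range.1 hc
  rw [hrec (t + 1 - c) (by omega) (by omega), show t + 1 - c - 1 = t - c by omega, add_mulVec,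
    mulVec_mulVec, mulVec_mulVec]

lemma closedLoop_eq_response {nx nu T : ℕ} {A : Matrix (Fin nx) (Fin nx) ℝ}
    {B : Matrix (Fin nx) (Fin nu) ℝ} {Phix : ℕ → ℕ → Matrix (Fin nx) (Fin nx) ℝ}
    {Phiu : ℕ → ℕ → Matrix (Fin nu) (Fin nx) ℝ} {σ : ℕ → ℝ} (h00 : Phix 0 0 = 1)
    (hrec0 : ∀ t < T, Phix (t + 1) 0 = σ t • 1)
    (hrec : ∀ t < T, ∀ j, 1 ≤ j → j ≤ t + 1 →
      Phix (t + 1) j = A * Phix t (j - 1) + B * Phiu t (j - 1))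
    {x v : ℕ → Fin nx → ℝ} {u : ℕ → Fin nu → ℝ} (hx0 : x 0 = v 0)
    (hx : ∀ t < T, x (t + 1) = A *ᵥ x t + B *ᵥ u t + σ t • v (t + 1))
    (hu : ∀ t < T, (∀ s ≤ t, x s = response Phix v s) → u t = response Phiu v t) :
    ∀ t ≤ T, x t = response Phix v t := by
  intro t
  induction t using Nat.strong_induction_on with
  | _ t ih =>
  intro ht
  cases t with
  | zero => rw [hx0, response, sum_range_one, h00, one_mulVec]
  | succ t =>
    have hprev : ∀ s ≤ t, x s = response Phix v s := fun s hs => ih s (by omega) (by omega)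
    rw [hx t ht, hprev t le_rfl, hu t ht hprev, response_succ (hrec0 t ht) (hrec t ht)]

def normalizedNoise {n : ℕ} (ξ : Fin n → ℝ) (σ : ℕ → ℝ) (δ : ℕ → Fin n → ℝ) : ℕ → Fin n → ℝ
  | 0 => ξ
  | t + 1 => (σ t)⁻¹ • δ t

namespace SLSFeasible

variable {nx nu px pu pT : ℕ} {Ahat : Matrix (Fin nx) (Fin nx) ℝ}
  {Bhat : Matrix (Fin nx) (Fin nu) ℝ} {εA εB σw : ℝ} {Fx : Matrix (Fin px) (Fin nx) ℝ}
  {bx : Fin px → ℝ} {Fu : Matrix (Fin pu) (Fin nu) ℝ} {bu : Fin pu → ℝ}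
  {FT : Matrix (Fin pT) (Fin nx) ℝ} {bT : Fin pT → ℝ} {T : ℕ} {ξ : Fin nx → ℝ}
  {Phix : ℕ → ℕ → Matrix (Fin nx) (Fin nx) ℝ} {Phiu : ℕ → ℕ → Matrix (Fin nu) (Fin nx) ℝ}
  {σ : ℕ → ℝ}

lemma isUnit_bigBlock
    (hfeas : SLSFeasible Ahat Bhat εA εB σw Fx bx Fu bu FT bT T ξ Phix Phiu σ) :
    IsUnit (bigBlock T Phix) :=
  _root_.isUnit_bigBlock Phix fun t ht => by
    cases t with
    | zero => rw [hfeas.phix_zero]; exact isUnit_one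
    | succ t =>
      rw [hfeas.phix_rec_zero t ht, ← Algebra.algebraMap_eq_smul_one]
      exact (hfeas.sigma_pos t ht).ne'.isUnit.map _

lemma lumpedBound_le
    (hfeas : SLSFeasible Ahat Bhat εA εB σw Fx bx Fu bu FT bT T ξ Phix Phiu σ) {t : ℕ}
    (ht : t < T) :
    εA * (‖Phix t t *ᵥ ξ‖ + ∑ k ∈ Icc 1 t, opInf (Phix t (t - k))) +
      εB * (‖Phiu t t *ᵥ ξ‖ + ∑ k ∈ Icc 1 t, opInf (Phiu t (t - k))) + σw ≤ σ t := by
  rcases t with _ | t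
  · simpa using hfeas.bound_zero
  · exact hfeas.bound_succ _ (by omega) ht

lemma norm_noise_le_one
    (hfeas : SLSFeasible Ahat Bhat εA εB σw Fx bx Fu bu FT bT T ξ Phix Phiu σ)
    {ΔA : Matrix (Fin nx) (Fin nx) ℝ} {ΔB : Matrix (Fin nx) (Fin nu) ℝ}
    {w x v : ℕ → Fin nx → ℝ} {u : ℕ → Fin nu → ℝ} (hΔA : opInf ΔA ≤ εA) (hΔB : opInf ΔB ≤ εB)
    (hw : ∀ t < T, ‖w t‖ ≤ σw) (hv0 : v 0 = ξ)
    (hv : ∀ t < T, σ t • v (t + 1) = ΔA *ᵥ x t + ΔB *ᵥ u t + w t)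
    (hx : ∀ t < T, x t = response Phix v t) (hu : ∀ t < T, u t = response Phiu v t) :
    ∀ k ∈ Icc 1 T, ‖v k‖ ≤ 1 := by
  intro k hk
  induction k using Nat.strong_induction_on with
  | _ k ih =>
  obtain ⟨hk1, hkT⟩ := mem_Icc.1 hk
  obtain ⟨t, rfl⟩ : ∃ t, k = t + 1 := ⟨k - 1, by omega⟩
  have ht : t < T := by omega
  have hprev : ∀ c ∈ Icc 1 t, ‖v c‖ ≤ 1 := fun c hc =>
    ih c (by rw [mem_Icc] at hc; omega) (Icc_subset_Icc_right (by omega) hc)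
  have hxt : ‖x t‖ ≤ ‖Phix t t *ᵥ ξ‖ + ∑ k ∈ Icc 1 t, opInf (Phix t (t - k)) := by
    rw [hx t ht, ← hv0]; exact norm_response_le hprev
  have hut : ‖u t‖ ≤ ‖Phiu t t *ᵥ ξ‖ + ∑ k ∈ Icc 1 t, opInf (Phiu t (t - k)) := by
    rw [hu t ht, ← hv0]; exact norm_response_le hprev
  have hσ := hfeas.sigma_pos t ht
  have hδ : σ t * ‖v (t + 1)‖ ≤ σ t * 1 :=
    calc σ t * ‖v (t + 1)‖ = ‖ΔA *ᵥ x t + ΔB *ᵥ u t + w t‖ := by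
          rw [← hv t ht, norm_smul, Real.norm_of_nonneg hσ.le]
      _ ≤ ‖ΔA *ᵥ x t‖ + ‖ΔB *ᵥ u t‖ + ‖w t‖ := norm_add₃_le
      _ ≤ εA * (‖Phix t t *ᵥ ξ‖ + ∑ k ∈ Icc 1 t, opInf (Phix t (t - k))) +
            εB * (‖Phiu t t *ᵥ ξ‖ + ∑ k ∈ Icc 1 t, opInf (Phiu t (t - k))) + σw :=
          add_le_add (add_le_add (norm_mulVec_le_of_opInf_le hΔA hxt)
            (norm_mulVec_le_of_opInf_le hΔB hut)) (hw t ht)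
      _ ≤ σ t * 1 := (hfeas.lumpedBound_le ht).trans_eq (mul_one _).symm
  exact le_of_mul_le_mul_left hδ hσ

end SLSFeasible

theorem statement13_general (nx nu px pu pT : ℕ)
    (Ahat : Matrix (Fin nx) (Fin nx) ℝ) (Bhat : Matrix (Fin nx) (Fin nu) ℝ)
    (εA εB σw : ℝ)
    (Fx : Matrix (Fin px) (Fin nx) ℝ) (bx : Fin px → ℝ)
    (Fu : Matrix (Fin pu) (Fin nu) ℝ) (bu : Fin pu → ℝ)
    (FT : Matrix (Fin pT) (Fin nx) ℝ) (bT : Fin pT → ℝ)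
    (T : ℕ) (ξ : Fin nx → ℝ)
    (Phix : ℕ → ℕ → Matrix (Fin nx) (Fin nx) ℝ)
    (Phiu : ℕ → ℕ → Matrix (Fin nu) (Fin nx) ℝ)
    (σ : ℕ → ℝ)
    (hfeas : SLSFeasible Ahat Bhat εA εB σw Fx bx Fu bu FT bT T ξ Phix Phiu σ) :
    IsUnit (bigBlock T Phix) ∧
    ∀ (ΔA : Matrix (Fin nx) (Fin nx) ℝ) (ΔB : Matrix (Fin nx) (Fin nu) ℝ)
      (w : ℕ → Fin nx → ℝ),
      opInf ΔA ≤ εA → opInf ΔB ≤ εB → (∀ t < T, ‖w t‖ ≤ σw) →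
      ∀ (x : ℕ → Fin nx → ℝ) (u : ℕ → Fin nu → ℝ),
        x 0 = ξ →
        (∀ t < T, u t = ∑ i ∈ Finset.range (t + 1),
          Matrix.mulVec
            (Matrix.of fun (a : Fin nu) (b : Fin nx) =>
              (bigBlock T Phiu * (bigBlock T Phix)⁻¹) (Fin.ofNat (T + 1) t, a)
                (Fin.ofNat (T + 1) i, b))
            (x i)) →
        (∀ t < T, x (t + 1) = (Ahat + ΔA).mulVec (x t) + (Bhat + ΔB).mulVec (u t) + w t) →
        (∀ t < T, Fx.mulVec (x t) ≤ bx ∧ Fu.mulVec (u t) ≤ bu) ∧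
          FT.mulVec (x T) ≤ bT := by
  have hΦ := hfeas.isUnit_bigBlock
  refine ⟨hΦ, fun ΔA ΔB w hΔA hΔB hw x u hx0 hu hdyn => ?_⟩
  set v := normalizedNoise ξ σ fun t => ΔA *ᵥ x t + ΔB *ᵥ u t + w t
  have hv : ∀ t < T, σ t • v (t + 1) = ΔA *ᵥ x t + ΔB *ᵥ u t + w t := fun t ht =>
    smul_inv_smul₀ (hfeas.sigma_pos t ht).ne' _
  have hxv : ∀ t ≤ T, x t = response Phix v t := by
    refine closedLoop_eq_response hfeas.phix_zero hfeas.phix_rec_zero hfeas.phix_rec hx0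
      (fun t ht => ?_) fun t ht hx => (hu t ht).trans (sum_blockAt_mulVec_eq_response hΦ ht.le hx)
    rw [hdyn t ht, hv t ht, add_mulVec, add_mulVec]
    abel
  have huv : ∀ t < T, u t = response Phiu v t := fun t ht =>
    (hu t ht).trans (sum_blockAt_mulVec_eq_response hΦ ht.le fun s hs => hxv s (by omega))
  have hnoise : ∀ t ≤ T, ∀ k ∈ Icc 1 t, ‖v k‖ ≤ 1 := fun t ht k hk =>
    hfeas.norm_noise_le_one hΔA hΔB hw rfl hv (fun t ht => hxv t ht.le) huv k
      (Icc_subset_Icc_right ht hk)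
  refine ⟨fun t ht => ⟨?_, ?_⟩, ?_⟩
  · rw [hxv t ht.le]
    exact mulVec_response_le (hnoise t ht.le) (hfeas.state_tight · t ht)
  · rw [huv t ht]
    exact mulVec_response_le (hnoise t ht.le) (hfeas.input_tight · t ht)
  · rw [hxv T le_rfl]
    exact mulVec_response_le (hnoise T le_rfl) hfeas.terminal_tight

theorem statement13 (nx nu px pu pT : ℕ) (hnx : 1 ≤ nx) (hnu : 1 ≤ nu)
    (Ahat : Matrix (Fin nx) (Fin nx) ℝ) (Bhat : Matrix (Fin nx) (Fin nu) ℝ)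
    (εA εB σw : ℝ) (hεA : 0 ≤ εA) (hεB : 0 ≤ εB) (hσw : 0 < σw)
    (Fx : Matrix (Fin px) (Fin nx) ℝ) (bx : Fin px → ℝ)
    (Fu : Matrix (Fin pu) (Fin nu) ℝ) (bu : Fin pu → ℝ)
    (FT : Matrix (Fin pT) (Fin nx) ℝ) (bT : Fin pT → ℝ)
    (T : ℕ) (hT : 1 ≤ T) (ξ : Fin nx → ℝ)
    (Phix : ℕ → ℕ → Matrix (Fin nx) (Fin nx) ℝ)
    (Phiu : ℕ → ℕ → Matrix (Fin nu) (Fin nx) ℝ)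
    (σ : ℕ → ℝ)
    (hfeas : SLSFeasible Ahat Bhat εA εB σw Fx bx Fu bu FT bT T ξ Phix Phiu σ) :
    IsUnit (bigBlock T Phix) ∧
    ∀ (ΔA : Matrix (Fin nx) (Fin nx) ℝ) (ΔB : Matrix (Fin nx) (Fin nu) ℝ)
      (w : ℕ → Fin nx → ℝ),
      opInf ΔA ≤ εA → opInf ΔB ≤ εB → (∀ t < T, ‖w t‖ ≤ σw) →
      ∀ (x : ℕ → Fin nx → ℝ) (u : ℕ → Fin nu → ℝ),
        x 0 = ξ →
        (∀ t < T, u t = ∑ i ∈ Finset.range (t + 1),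
          Matrix.mulVec
            (Matrix.of fun (a : Fin nu) (b : Fin nx) =>
              (bigBlock T Phiu * (bigBlock T Phix)⁻¹) (Fin.ofNat (T + 1) t, a)
                (Fin.ofNat (T + 1) i, b))
            (x i)) →
        (∀ t < T, x (t + 1) = (Ahat + ΔA).mulVec (x t) + (Bhat + ΔB).mulVec (u t) + w t) →
        (∀ t < T, Fx.mulVec (x t) ≤ bx ∧ Fu.mulVec (u t) ≤ bu) ∧
          FT.mulVec (x T) ≤ bT :=
  statement13_general nx nu px pu pT Ahat Bhat εA εB σw Fx bx Fu bu FT bT T ξ Phix Phiu σ hfeas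
end
end

section
/- (Feasibility inside the terminal set.) Suppose there exists K ∈ ℝ^{n_u×n_x} such that for every x ∈ ℝ^{n_x} with F_T x ≤ b_T: F_x x ≤ b_x, F_u(Kx) ≤ b_u, and for every Δ_A ∈ ℝ^{n_x×n_x} with ‖Δ_A‖_{∞→∞} ≤ ε_A, every Δ_B ∈ ℝ^{n_x×n_u} with ‖Δ_B‖_{∞→∞} ≤ ε_B, and every w ∈ ℝ^{n_x} with ‖w‖_∞ ≤ σ_w: F_T(((Â + Δ_A) + (B̂ + Δ_B)K)x + w) ≤ b_T. Then for every x ∈ ℝ^{n_x} with F_T x ≤ b_T, there exists a family that is feasible for the tightened SLS problem at (1, x); in particular, for every row f of F_T with corresponding entry b of b_T, fᵀ(Â + B̂K)x + ‖f‖_1(ε_A‖x‖_∞ + ε_B‖Kx‖_∞ + σ_w) ≤ b. -/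
open Matrix Finset

noncomputable section

lemma mul_sign_eq_abs (a : ℝ) : a * Real.sign a = |a| := by
  rcases lt_trichotomy a 0 with h|h|h
  · rw [Real.sign_of_neg h, abs_of_neg h]; ring
  · simp [h]
  · rw [Real.sign_of_pos h, abs_of_pos h]; ring

lemma abs_sign_le_one' (a : ℝ) : |Real.sign a| ≤ 1 := by
  rcases lt_trichotomy a 0 with h|h|h
  · rw [Real.sign_of_neg h]; norm_num
  · simp [h]
  · rw [Real.sign_of_pos h]; norm_num

lemma exists_abs_eq_norm {n : ℕ} (hn : 1 ≤ n) (v : Fin n → ℝ) : ∃ k, |v k| = ‖v‖ := by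
  haveI : Nonempty (Fin n) := ⟨⟨0, hn⟩⟩
  obtain ⟨k, hk⟩ := Finite.exists_max fun k => |v k|
  refine ⟨k, le_antisymm ((Real.norm_eq_abs _) ▸ norm_le_pi_norm v k) ?_⟩
  exact (pi_norm_le_iff_of_nonneg (abs_nonneg _)).mpr fun j => (Real.norm_eq_abs _) ▸ hk j

theorem statement15 (nx nu px pu pT : ℕ) (hnx : 1 ≤ nx) (hnu : 1 ≤ nu)
    (Ahat : Matrix (Fin nx) (Fin nx) ℝ) (Bhat : Matrix (Fin nx) (Fin nu) ℝ)
    (εA εB σw : ℝ) (hεA : 0 ≤ εA) (hεB : 0 ≤ εB) (hσw : 0 < σw)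
    (Fx : Matrix (Fin px) (Fin nx) ℝ) (bx : Fin px → ℝ)
    (Fu : Matrix (Fin pu) (Fin nu) ℝ) (bu : Fin pu → ℝ)
    (FT : Matrix (Fin pT) (Fin nx) ℝ) (bT : Fin pT → ℝ)
    (K : Matrix (Fin nu) (Fin nx) ℝ)
    (hK : ∀ x : Fin nx → ℝ, FT.mulVec x ≤ bT →
      Fx.mulVec x ≤ bx ∧ Fu.mulVec (K.mulVec x) ≤ bu ∧
      ∀ (ΔA : Matrix (Fin nx) (Fin nx) ℝ) (ΔB : Matrix (Fin nx) (Fin nu) ℝ)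
        (w : Fin nx → ℝ), opInf ΔA ≤ εA → opInf ΔB ≤ εB → ‖w‖ ≤ σw →
        FT.mulVec (((Ahat + ΔA) + (Bhat + ΔB) * K).mulVec x + w) ≤ bT) :
    ∀ x : Fin nx → ℝ, FT.mulVec x ≤ bT →
      (∃ (Phix : ℕ → ℕ → Matrix (Fin nx) (Fin nx) ℝ)
        (Phiu : ℕ → ℕ → Matrix (Fin nu) (Fin nx) ℝ) (σ : ℕ → ℝ),
        SLSFeasible Ahat Bhat εA εB σw Fx bx Fu bu FT bT 1 x Phix Phiu σ) ∧
      ∀ i : Fin pT,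
        FT i ⬝ᵥ (Ahat + Bhat * K).mulVec x +
          norm1 (FT i) * (εA * ‖x‖ + εB * ‖K.mulVec x‖ + σw) ≤ bT i := by
  intro x hx
  obtain ⟨h1, h2, h3⟩ := hK x hx
  haveI : Nonempty (Fin nx) := ⟨⟨0, hnx⟩⟩
  haveI : Nonempty (Fin nu) := ⟨⟨0, hnu⟩⟩
  have key : ∀ i : Fin pT,
      FT i ⬝ᵥ (Ahat + Bhat * K).mulVec x +
        norm1 (FT i) * (εA * ‖x‖ + εB * ‖K.mulVec x‖ + σw) ≤ bT i := by
    intro i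
    obtain ⟨kA, hkA⟩ := exists_abs_eq_norm hnx x
    obtain ⟨kB, hkB⟩ := exists_abs_eq_norm hnu (K.mulVec x)
    set ΔA : Matrix (Fin nx) (Fin nx) ℝ :=
      fun j k => if k = kA then εA * Real.sign (FT i j) * Real.sign (x kA) else 0 with hΔA
    set ΔB : Matrix (Fin nx) (Fin nu) ℝ :=
      fun j l => if l = kB then εB * Real.sign (FT i j) * Real.sign (K.mulVec x kB) else 0 with hΔB
    set w : Fin nx → ℝ := fun j => σw * Real.sign (FT i j) with hw'
    have hA : opInf ΔA ≤ εA := by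
      apply ciSup_le; intro j
      have : ∑ k, |ΔA j k| = |εA * Real.sign (FT i j) * Real.sign (x kA)| := by
        simp [hΔA, apply_ite abs, Finset.sum_ite_eq']
      rw [this, abs_mul, abs_mul, abs_of_nonneg hεA]
      calc εA * |Real.sign (FT i j)| * |Real.sign (x kA)| ≤ εA * 1 * 1 := by
              gcongr <;> exact abs_sign_le_one' _
        _ = εA := by ring
    have hB : opInf ΔB ≤ εB := by
      apply ciSup_le; intro j
      have : ∑ l, |ΔB j l| = |εB * Real.sign (FT i j) * Real.sign (K.mulVec x kB)| := by
        simp [hΔB, apply_ite abs, Finset.sum_ite_eq']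
      rw [this, abs_mul, abs_mul, abs_of_nonneg hεB]
      calc εB * |Real.sign (FT i j)| * |Real.sign (K.mulVec x kB)| ≤ εB * 1 * 1 := by
              gcongr <;> exact abs_sign_le_one' _
        _ = εB := by ring
    have hwle : ‖w‖ ≤ σw := by
      refine (pi_norm_le_iff_of_nonneg hσw.le).mpr fun j => ?_
      rw [hw', Real.norm_eq_abs, abs_mul, abs_of_nonneg hσw.le]
      calc σw * |Real.sign (FT i j)| ≤ σw * 1 := by gcongr; exact abs_sign_le_one' _
        _ = σw := by ring
    have e1 : FT i ⬝ᵥ ΔA.mulVec x = εA * ‖x‖ * norm1 (FT i) := by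
      calc FT i ⬝ᵥ ΔA.mulVec x
          = ∑ j, εA * (x kA * Real.sign (x kA)) * (FT i j * Real.sign (FT i j)) := by
            simp only [dotProduct, mulVec, hΔA, ite_mul, zero_mul, Finset.sum_ite_eq',
              Finset.mem_univ, if_true]
            exact Finset.sum_congr rfl fun j _ => by ring
        _ = εA * ‖x‖ * norm1 (FT i) := by
            simp only [mul_sign_eq_abs, hkA, norm1, Finset.mul_sum]
    have e2 : FT i ⬝ᵥ (ΔB * K).mulVec x = εB * ‖K.mulVec x‖ * norm1 (FT i) := by
      calc FT i ⬝ᵥ (ΔB * K).mulVec x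
          = FT i ⬝ᵥ ΔB.mulVec (K.mulVec x) := by rw [← Matrix.mulVec_mulVec]
        _ = ∑ j, εB * (K.mulVec x kB * Real.sign (K.mulVec x kB)) *
              (FT i j * Real.sign (FT i j)) := by
            simp only [dotProduct, mulVec, hΔB, ite_mul, zero_mul, Finset.sum_ite_eq',
              Finset.mem_univ, if_true]
            exact Finset.sum_congr rfl fun j _ => by ring
        _ = εB * ‖K.mulVec x‖ * norm1 (FT i) := by
            simp only [mul_sign_eq_abs, hkB, norm1, Finset.mul_sum]
    have e3 : FT i ⬝ᵥ w = σw * norm1 (FT i) := by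
      simp only [dotProduct, hw', norm1, Finset.mul_sum]
      exact Finset.sum_congr rfl fun j _ => by rw [← mul_sign_eq_abs]; ring
    have hterm : FT i ⬝ᵥ (((Ahat + ΔA) + (Bhat + ΔB) * K).mulVec x + w) ≤ bT i :=
      h3 ΔA ΔB w hA hB hwle i
    have expand : FT i ⬝ᵥ (((Ahat + ΔA) + (Bhat + ΔB) * K).mulVec x + w)
        = FT i ⬝ᵥ (Ahat + Bhat * K).mulVec x +
          (FT i ⬝ᵥ ΔA.mulVec x + FT i ⬝ᵥ (ΔB * K).mulVec x + FT i ⬝ᵥ w) := by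
      have hM : Ahat + ΔA + (Bhat + ΔB) * K = Ahat + Bhat * K + (ΔA + ΔB * K) := by
        rw [Matrix.add_mul]; abel
      rw [dotProduct_add, hM, Matrix.add_mulVec, Matrix.add_mulVec, Matrix.add_mulVec,
        dotProduct_add, dotProduct_add, dotProduct_add]
      ring
    rw [expand, e1, e2, e3] at hterm
    linarith
  refine ⟨?_, key⟩
  set σ0 : ℝ := εA * ‖x‖ + εB * ‖K.mulVec x‖ + σw with hσ0
  have hσ0pos : 0 < σ0 := by positivity
  refine ⟨fun t j => if t = 0 then 1 else if j = 0 then σ0 • (1 : Matrix (Fin nx) (Fin nx) ℝ)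
      else Ahat * 1 + Bhat * K,
    fun _ _ => K, fun _ => σ0, ?_⟩
  constructor
  · intro t _; exact hσ0pos
  · rfl
  · intro t ht; interval_cases t; simp
  · intro t ht j hj1 hj2; interval_cases t; interval_cases j; simp
  · simp [Matrix.one_mulVec, hσ0]
  · intro t ht1 ht2; omega
  · intro i t ht; interval_cases t
    simp only [show Finset.Icc 1 0 = ∅ from rfl, Finset.sum_empty, add_zero, if_pos,
      reduceIte, Matrix.one_mulVec]
    exact h1 i
  · intro i t ht; interval_cases t
    simp only [show Finset.Icc 1 0 = ∅ from rfl, Finset.sum_empty, add_zero]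
    exact h2 i
  · intro i
    have : (Finset.Icc 1 1) = {1} := rfl
    simp only [this, Finset.sum_singleton]
    have heq : ((if (1:ℕ) = 0 then (1 : Matrix (Fin nx) (Fin nx) ℝ) else if (1:ℕ) - 1 = 0 then
        σ0 • (1 : Matrix (Fin nx) (Fin nx) ℝ) else Ahat * 1 + Bhat * K)) = σ0 • 1 := by norm_num
    have h11 : ((if (1:ℕ) = 0 then (1 : Matrix (Fin nx) (Fin nx) ℝ) else if (1:ℕ) = 0 then
        σ0 • (1 : Matrix (Fin nx) (Fin nx) ℝ) else Ahat * 1 + Bhat * K)) = Ahat + Bhat * K := by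
      norm_num
    norm_num
    rw [Matrix.smul_mulVec, Matrix.one_mulVec]
    have hn1 : norm1 (σ0 • FT i) = σ0 * norm1 (FT i) := by
      simp [norm1, Finset.mul_sum, abs_mul, abs_of_nonneg hσ0pos.le]
    rw [hn1]
    have := key i
    calc FT i ⬝ᵥ (Ahat + Bhat * K).mulVec x + σ0 * norm1 (FT i)
        = FT i ⬝ᵥ (Ahat + Bhat * K).mulVec x + norm1 (FT i) * σ0 := by ring
      _ ≤ bT i := key i
end
end
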